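/- arXiv:1708.08087 — 4 statements merged into one kernel-verified Lean document; each statement's English description precedes it below -/
import Mathlib

section
/- Let a₀¹ ≠ 0, a₁¹ and x₀ be real numbers, and define A(t) = x₀·exp(a₀¹·t) / (1 − (a₁¹/a₀¹)·x₀·(exp(a₀¹·t) − 1)). Then A(0) = x₀, and for every t ≥ 0 at which the denominator 1 − (a₁¹/a₀¹)·x₀·(exp(a₀¹·t) − 1) is nonzero, A is differentiable at t with A'(t) = a₀¹·A(t) + a₁¹·A(t)². -/
/-! The trajectory is a quotient `N / D` with `N t = x₀ e^{a₀¹ t}` and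
`D t = 1 - (a₁¹/a₀¹) x₀ (e^{a₀¹ t} - 1)`, so `N' = a₀¹ N` and `D' = -a₁¹ N`; the quotient rule
then turns these two linear equations into the Riccati equation for `N / D`. -/

theorem HasDerivAt.div_of_riccati {N D : ℝ → ℝ} {a b t : ℝ}
    (hN : HasDerivAt N (a * N t) t) (hD : HasDerivAt D (-(b * N t)) t) (hDt : D t ≠ 0) :
    HasDerivAt (fun s => N s / D s) (a * (N t / D t) + b * (N t / D t) ^ 2) t :=
  (hN.div hD hDt).congr_deriv (by field_simp; ring)

theorem hasDerivAt_const_mul_exp_mul (x a t : ℝ) :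
    HasDerivAt (fun s => x * Real.exp (a * s)) (a * (x * Real.exp (a * t))) t := by
  have h := ((hasDerivAt_id t).const_mul a).exp.const_mul x
  simp only [id, mul_one] at h
  exact h.congr_deriv (by ring)

/-- Explicit mean trajectory of the affine McKean-Vlasov model:
solution of the Riccati ODE `A' = a₀¹ A + a₁¹ A²`, `A 0 = x₀`. -/
theorem stmt_7 (a01 a11 x0 : ℝ) (ha01 : a01 ≠ 0) (A : ℝ → ℝ)
    (hA : ∀ t : ℝ, A t = x0 * Real.exp (a01 * t)
      / (1 - (a11 / a01) * x0 * (Real.exp (a01 * t) - 1))) :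
    A 0 = x0 ∧ ∀ t : ℝ, 0 ≤ t →
      (1 - (a11 / a01) * x0 * (Real.exp (a01 * t) - 1)) ≠ 0 →
      HasDerivAt A (a01 * A t + a11 * (A t) ^ 2) t := by
  obtain rfl : A = _ := funext hA
  refine ⟨by simp, fun t _ hDt => ?_⟩
  have hN := hasDerivAt_const_mul_exp_mul x0 a01 t
  have hD : HasDerivAt (fun s => 1 - (a11 / a01) * x0 * (Real.exp (a01 * s) - 1))
      (-(a11 * (x0 * Real.exp (a01 * t)))) t := by
    have h := ((hasDerivAt_const_mul_exp_mul 1 a01 t).sub_const 1).const_mul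
      ((a11 / a01) * x0) |>.const_sub 1
    simp only [one_mul] at h
    exact h.congr_deriv (by field_simp)
  exact hN.div_of_riccati hD hDt
end

section
/- Let k be a natural number and g : ℝ → ℝ a continuously differentiable function such that g(u)·e^{−u²/2}·H̄_{k+1}(u) → 0 as u → ±∞, and such that the functions u ↦ g(u)·H̄_k(u)·e^{−u²/2} and u ↦ (g'(u) − u·g(u))·H̄_{k+1}(u)·e^{−u²/2} are Lebesgue integrable on ℝ. Then ∫_ℝ g(u)·H̄_k(u)·e^{−u²/2} du = −(2k+2)^{−1/2} · ∫_ℝ (g'(u) − u·g(u))·H̄_{k+1}(u)·e^{−u²/2} du. -/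
open MeasureTheory Filter

/-- Physicists' Hermite polynomial via the Rodrigues formula:
`H_n(x) = (−1)ⁿ e^{x²} (dⁿ/dxⁿ)(e^{−x²})`. -/
noncomputable def physHermite (n : ℕ) (x : ℝ) : ℝ :=
  (-1) ^ n * Real.exp (x ^ 2) * iteratedDeriv n (fun y => Real.exp (-y ^ 2)) x

/-- Normalized Hermite polynomial `H̄_n = (2ⁿ n! √π)^{−1/2} H_n`. -/
noncomputable def normHermite (n : ℕ) (x : ℝ) : ℝ :=
  ((2 ^ n * n.factorial * Real.sqrt Real.pi : ℝ) ^ (-(1 / 2) : ℝ)) * physHermite n x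

/-! Integrate by parts against `H̄_{k+1}`: Rodrigues' formula gives `H̄_{k+1}' = √(2k+2) H̄_k`,
the derivative of `g(u) e^{-u²/2}` is `(g'(u) − u g(u)) e^{-u²/2}`, and the boundary terms
vanish by hypothesis. -/

namespace Polynomial

theorem derivative_hermite_succ (n : ℕ) :
    derivative (hermite (n + 1)) = (n + 1 : ℤ) • hermite n := by
  induction n with
  | zero => simp [hermite_zero]
  | succ n ih =>
    have hd : derivative (hermite n) = X * hermite n - hermite (n + 1) := by
      rw [hermite_succ n]; ring
    rw [hermite_succ (n + 1), derivative_sub, derivative_mul, derivative_X, one_mul, ih,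
      derivative_smul, hd]
    simp only [zsmul_eq_mul]
    push_cast
    ring

end Polynomial

open Polynomial in
/-- Mathlib's `hermite` is the probabilists' family, orthogonal for `e^{-x²/2}`; rescaling the
variable by `√2` turns it into the physicists' one. -/
theorem physHermite_eq_aeval_hermite (n : ℕ) (x : ℝ) :
    physHermite n x = √2 ^ n * aeval (√2 * x) (hermite n) := by
  have h2 : √2 ^ 2 = 2 := Real.sq_sqrt (by norm_num)
  have hscale : (fun y : ℝ => Real.exp (-y ^ 2)) = fun y => Real.exp (-((√2 * y) ^ 2 / 2)) := by
    funext y; rw [mul_pow, h2]; ring_nf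
  have hgauss : ContDiff ℝ n (fun y : ℝ => Real.exp (-(y ^ 2 / 2))) := by fun_prop
  unfold physHermite
  rw [hscale, iteratedDeriv_comp_const_mul hgauss, iteratedDeriv_eq_iterate]
  beta_reduce
  rw [deriv_gaussian_eq_hermite_mul_gaussian, mul_pow, h2]
  have hexp : Real.exp (x ^ 2) * Real.exp (-(2 * x ^ 2 / 2)) = 1 := by
    rw [← Real.exp_add]; ring_nf; exact Real.exp_zero
  have hsign : ((-1 : ℝ) ^ n) * (-1) ^ n = 1 := by rw [← mul_pow]; norm_num
  linear_combination
    (√2 ^ n * aeval (√2 * x) (hermite n)) * ((-1) ^ n * (-1) ^ n * hexp + hsign)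

open Polynomial in
theorem hasDerivAt_physHermite_succ (n : ℕ) (x : ℝ) :
    HasDerivAt (physHermite (n + 1)) ((2 * n + 2) * physHermite n x) x := by
  have h2 : √2 ^ 2 = 2 := Real.sq_sqrt (by norm_num)
  have hpoly := ((hermite (n + 1)).hasDerivAt_aeval (√2 * x)).comp x
    ((hasDerivAt_id x).const_mul √2)
  rw [derivative_hermite_succ, map_zsmul] at hpoly
  rw [show physHermite (n + 1) = _ from funext (physHermite_eq_aeval_hermite (n + 1))]
  refine (hpoly.const_mul (√2 ^ (n + 1))).congr_deriv ?_
  rw [physHermite_eq_aeval_hermite, zsmul_eq_mul, pow_succ]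
  push_cast
  linear_combination (√2 ^ n * aeval (√2 * x) (hermite n) * (n + 1)) * h2

theorem hermiteNormConst_succ (k : ℕ) :
    (2 ^ (k + 1) * (k + 1).factorial * √Real.pi : ℝ) ^ (-(1 / 2) : ℝ)
      = (√(2 * k + 2))⁻¹ * (2 ^ k * k.factorial * √Real.pi : ℝ) ^ (-(1 / 2) : ℝ) := by
  have hfac : (2 ^ (k + 1) * (k + 1).factorial * √Real.pi : ℝ)
      = (2 * k + 2) * (2 ^ k * k.factorial * √Real.pi) := by
    push_cast [Nat.factorial_succ, pow_succ]
    ring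
  rw [hfac, Real.mul_rpow (by positivity) (by positivity), Real.rpow_neg (by positivity),
    ← Real.sqrt_eq_rpow]

theorem hasDerivAt_normHermite_succ (k : ℕ) (x : ℝ) :
    HasDerivAt (normHermite (k + 1)) (√(2 * k + 2) * normHermite k x) x := by
  have hdiv : (√(2 * k + 2))⁻¹ * (2 * k + 2) = √(2 * k + 2) := by
    rw [inv_mul_eq_div, Real.div_sqrt]
  refine ((hasDerivAt_physHermite_succ k x).const_mul
    ((2 ^ (k + 1) * (k + 1).factorial * √Real.pi : ℝ) ^ (-(1 / 2) : ℝ))).congr_deriv ?_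
  rw [hermiteNormConst_succ, normHermite]
  linear_combination
    (2 ^ k * k.factorial * √Real.pi : ℝ) ^ (-(1 / 2) : ℝ) * physHermite k x * hdiv

theorem hasDerivAt_mul_gaussian {g : ℝ → ℝ} {g' x : ℝ} (hg : HasDerivAt g g' x) :
    HasDerivAt (fun u => g u * Real.exp (-u ^ 2 / 2))
      ((g' - x * g x) * Real.exp (-x ^ 2 / 2)) x := by
  have hexp : HasDerivAt (fun u : ℝ => Real.exp (-u ^ 2 / 2))
      (Real.exp (-x ^ 2 / 2) * (-x)) x := by
    refine ((hasDerivAt_pow 2 x).neg.div_const 2).exp.congr_deriv ?_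
    simp only [Pi.neg_apply]
    push_cast
    ring
  refine (hg.mul hexp).congr_deriv ?_
  ring

/-- Hermite integration-by-parts identity:
`∫ g H̄_k e^{−u²/2} = −(2k+2)^{−1/2} ∫ (g' − u g) H̄_{k+1} e^{−u²/2}`. -/
theorem stmt_9 (k : ℕ) (g : ℝ → ℝ) (hg : ContDiff ℝ 1 g)
    (hlim_top : Tendsto (fun u => g u * Real.exp (-u ^ 2 / 2) * normHermite (k + 1) u)
      atTop (nhds 0))
    (hlim_bot : Tendsto (fun u => g u * Real.exp (-u ^ 2 / 2) * normHermite (k + 1) u)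
      atBot (nhds 0))
    (hint1 : Integrable (fun u => g u * normHermite k u * Real.exp (-u ^ 2 / 2)))
    (hint2 : Integrable
      (fun u => (deriv g u - u * g u) * normHermite (k + 1) u * Real.exp (-u ^ 2 / 2))) :
    ∫ u : ℝ, g u * normHermite k u * Real.exp (-u ^ 2 / 2)
      = -(Real.sqrt (2 * k + 2))⁻¹
        * ∫ u : ℝ, (deriv g u - u * g u) * normHermite (k + 1) u
            * Real.exp (-u ^ 2 / 2) := by
  set c := √(2 * k + 2)
  have hc : c ≠ 0 := by positivity
  have hparts := integral_mul_deriv_eq_deriv_mul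
    (u := fun u => g u * Real.exp (-u ^ 2 / 2)) (v := normHermite (k + 1))
    (u' := fun u => (deriv g u - u * g u) * Real.exp (-u ^ 2 / 2))
    (v' := fun u => c * normHermite k u)
    (fun x _ => hasDerivAt_mul_gaussian (hg.differentiable one_ne_zero x).hasDerivAt)
    (fun x _ => hasDerivAt_normHermite_succ k x)
    ((hint1.const_mul c).congr (.of_forall fun u => by simp only [Pi.mul_apply]; ring))
    (hint2.congr (.of_forall fun u => by simp only [Pi.mul_apply]; ring))
    hlim_bot hlim_top
  have hleft : ∫ u, g u * Real.exp (-u ^ 2 / 2) * (c * normHermite k u)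
      = c * ∫ u, g u * normHermite k u * Real.exp (-u ^ 2 / 2) := by
    rw [← integral_const_mul]; congr 1; funext u; ring
  have hright : ∫ u, (deriv g u - u * g u) * Real.exp (-u ^ 2 / 2) * normHermite (k + 1) u
      = ∫ u, (deriv g u - u * g u) * normHermite (k + 1) u * Real.exp (-u ^ 2 / 2) := by
    congr 1; funext u; ring
  rw [hleft, hright, sub_self, zero_sub] at hparts
  rw [neg_mul, ← mul_neg, ← hparts, inv_mul_cancel_left₀ hc]
end

section
/- Let M and k be natural numbers. Then ∫_ℝ u^M · H_k(u) · e^{−u²} du equals √π · 2^{k−M} · M!/(((M−k)/2)!) if k ≤ M and M − k is even, and equals 0 if k > M or M − k is odd, where H_k is the physicists' Hermite polynomial of degree k. -/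
/-!
Since `H_k(u) e^{-u²} = (-1)ᵏ (d/du)ᵏ e^{-u²}` and every `(d/du)ʲ e^{-u²}` is a polynomial times
`e^{-u²}`, integrating by parts `k` times (all boundary terms vanish by integrability) gives
`∫ u^M H_k(u) e^{-u²} du = M (M-1) ⋯ (M-k+1) ∫ u^{M-k} e^{-u²} du`. The falling factorial vanishes
for `k > M`, odd Gaussian moments vanish by symmetry, and the even ones follow from
`∫ u^{n+2} e^{-u²} = (n+1)/2 ∫ u^n e^{-u²}`, one more integration by parts.
-/

open MeasureTheory

open Polynomial Real

noncomputable def gaussDeriv (p : ℝ[X]) : ℝ[X] := derivative p - C 2 * X * p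

lemma hasDerivAt_eval_mul_exp_neg_sq (p : ℝ[X]) (x : ℝ) :
    HasDerivAt (fun y => p.eval y * exp (-y ^ 2)) ((gaussDeriv p).eval x * exp (-x ^ 2)) x := by
  have hexp : HasDerivAt (fun y : ℝ => exp (-y ^ 2)) (exp (-x ^ 2) * -(2 * x)) x := by
    simpa using ((hasDerivAt_pow 2 x).fun_neg).exp
  refine ((p.hasDerivAt x).fun_mul hexp).congr_deriv ?_
  simp only [gaussDeriv, eval_sub, eval_mul, eval_C, eval_X]
  ring

lemma integrable_eval_mul_exp_neg_sq (p : ℝ[X]) :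
    Integrable (fun x : ℝ => p.eval x * exp (-x ^ 2)) := by
  induction p using Polynomial.induction_on' with
  | add p q hp hq => simpa only [eval_add, add_mul] using hp.fun_add hq
  | monomial n a =>
    have hn : -1 < (n : ℝ) := neg_one_lt_zero.trans_le n.cast_nonneg
    simpa [rpow_natCast, mul_assoc] using
      (integrable_rpow_mul_exp_neg_mul_sq one_pos hn).const_mul a

lemma integrable_pow_mul_eval_mul_exp_neg_sq (M : ℕ) (p : ℝ[X]) :
    Integrable (fun x : ℝ => x ^ M * (p.eval x * exp (-x ^ 2))) := by
  have h := integrable_eval_mul_exp_neg_sq (X ^ M * p)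
  simp only [eval_mul, eval_pow, eval_X] at h
  simpa only [mul_assoc] using h

lemma integral_pow_mul_gaussDeriv (M : ℕ) (p : ℝ[X]) :
    ∫ x, x ^ M * ((gaussDeriv p).eval x * exp (-x ^ 2))
      = -M * ∫ x, x ^ (M - 1) * (p.eval x * exp (-x ^ 2)) := by
  have h := integral_mul_deriv_eq_deriv_mul_of_integrable
    (fun x _ => hasDerivAt_pow M x) (fun x _ => hasDerivAt_eval_mul_exp_neg_sq p x)
    (integrable_pow_mul_eval_mul_exp_neg_sq M _)
    (by simpa only [Pi.mul_def, mul_assoc] using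
      (integrable_pow_mul_eval_mul_exp_neg_sq (M - 1) p).const_mul M)
    (integrable_pow_mul_eval_mul_exp_neg_sq M p)
  simp only [mul_assoc, integral_const_mul] at h
  rw [h, neg_mul]

lemma iteratedDeriv_exp_neg_sq (k : ℕ) :
    iteratedDeriv k (fun y => exp (-y ^ 2))
      = fun x => (gaussDeriv^[k] 1).eval x * exp (-x ^ 2) := by
  induction k with
  | zero => simp
  | succ k ih =>
    rw [iteratedDeriv_succ, ih, Function.iterate_succ_apply']
    exact funext fun x => (hasDerivAt_eval_mul_exp_neg_sq _ x).deriv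

lemma integral_pow_mul_iteratedDeriv_exp_neg_sq (k M : ℕ) :
    ∫ x, x ^ M * iteratedDeriv k (fun y => exp (-y ^ 2)) x
      = (-1) ^ k * M.descFactorial k * ∫ x, x ^ (M - k) * exp (-x ^ 2) := by
  rw [iteratedDeriv_exp_neg_sq]
  induction k generalizing M with
  | zero => simp
  | succ k ih =>
    rw [Function.iterate_succ_apply', integral_pow_mul_gaussDeriv, ih]
    cases M with
    | zero => simp
    | succ M =>
      rw [Nat.succ_descFactorial_succ, Nat.add_sub_cancel, Nat.succ_sub_succ]
      push_cast
      ring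

lemma integral_pow_add_two_mul_exp_neg_sq (n : ℕ) :
    ∫ x, x ^ (n + 2) * exp (-x ^ 2) = (n + 1) / 2 * ∫ x, x ^ n * exp (-x ^ 2) := by
  have h := integral_pow_mul_gaussDeriv (n + 1) 1
  have hint (x : ℝ) : x ^ (n + 1) * ((gaussDeriv 1).eval x * exp (-x ^ 2))
      = -2 * (x ^ (n + 2) * exp (-x ^ 2)) := by
    simp only [gaussDeriv, derivative_one, eval_sub, eval_mul, eval_C, eval_X, eval_one, eval_zero]
    ring
  simp only [hint, integral_const_mul, Nat.add_sub_cancel, eval_one, one_mul] at h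
  push_cast at h
  linarith

lemma integral_pow_mul_exp_neg_sq_of_odd {n : ℕ} (hn : Odd n) :
    ∫ x, x ^ n * exp (-x ^ 2) = 0 := by
  have h := integral_neg_eq_self (fun x : ℝ => x ^ n * exp (-x ^ 2)) volume
  simp only [hn.neg_pow, neg_sq, neg_mul, integral_neg] at h
  linarith

lemma integral_pow_two_mul_mul_exp_neg_sq (m : ℕ) :
    ∫ x, x ^ (2 * m) * exp (-x ^ 2) = √π * (2 * m).factorial / (4 ^ m * m.factorial) := by
  induction m with
  | zero => simpa using integral_gaussian 1
  | succ m ih =>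
    rw [mul_add_one, integral_pow_add_two_mul_exp_neg_sq, ih, Nat.factorial_succ,
      Nat.factorial_succ, Nat.factorial_succ]
    push_cast
    field_simp
    ring

lemma physHermite_mul_exp_neg_sq (k : ℕ) (x : ℝ) :
    physHermite k x * exp (-x ^ 2) = (-1) ^ k * iteratedDeriv k (fun y => exp (-y ^ 2)) x := by
  rw [physHermite, mul_right_comm, mul_assoc ((-1) ^ k), ← exp_add]
  simp

lemma integral_pow_mul_physHermite_mul_exp_neg_sq (M k : ℕ) :
    ∫ u, u ^ M * physHermite k u * exp (-u ^ 2)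
      = M.descFactorial k * ∫ x, x ^ (M - k) * exp (-x ^ 2) := by
  simp_rw [mul_assoc, physHermite_mul_exp_neg_sq, mul_left_comm _ ((-1 : ℝ) ^ k),
    integral_const_mul, integral_pow_mul_iteratedDeriv_exp_neg_sq, ← mul_assoc, ← mul_pow]
  norm_num

/-- Gaussian–Hermite moment integral: `∫ u^M H_k(u) e^{−u²} du` equals
`√π 2^{k−M} M!/(((M−k)/2)!)` if `k ≤ M` and `M − k` is even, and `0` otherwise. -/
theorem stmt_11 (M k : ℕ) :
    (k ≤ M → Even (M - k) →
      ∫ u : ℝ, u ^ M * physHermite k u * Real.exp (-u ^ 2)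
        = Real.sqrt Real.pi * (2 : ℝ) ^ ((k : ℤ) - (M : ℤ))
          * (M.factorial : ℝ) / (((M - k) / 2).factorial : ℝ)) ∧
    (M < k ∨ Odd (M - k) →
      ∫ u : ℝ, u ^ M * physHermite k u * Real.exp (-u ^ 2) = 0) := by
  refine ⟨fun hkM ⟨m, hm⟩ => ?_, fun h => ?_⟩
  · have hMk : M - k = 2 * m := by omega
    have hfac : ((2 * m).factorial : ℝ) * M.descFactorial k = M.factorial := by
      rw [← hMk]; exact_mod_cast Nat.factorial_mul_descFactorial hkM
    have hpow : (2 : ℝ) ^ ((k : ℤ) - (M : ℤ)) = (4 ^ m)⁻¹ := by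
      rw [show (k : ℤ) - M = -(2 * m : ℕ) by omega, zpow_neg, zpow_natCast, pow_mul]
      norm_num
    rw [integral_pow_mul_physHermite_mul_exp_neg_sq, hMk, integral_pow_two_mul_mul_exp_neg_sq,
      Nat.mul_div_cancel_left m two_pos, hpow, ← hfac]
    field_simp
  · rw [integral_pow_mul_physHermite_mul_exp_neg_sq]
    rcases h with h | h
    · simp [Nat.descFactorial_eq_zero_iff_lt.2 h]
    · rw [integral_pow_mul_exp_neg_sq_of_odd h, mul_zero]
end

section
/- Let (Y_i)_{i≥1} be i.i.d. real-valued random variables with E[|Y₁|^r] < ∞ for every r ≥ 1, and for each N set ζ_N := (1/N)·Σ_{i=1}^N Y_i − E[Y₁]. Then for every θ > 0 and every η > 0 there exist a constant C > 0 and N₀ ∈ ℕ such that for all N ≥ N₀: E[ ζ_N² · 1_{{ζ_N > θ}} ] ≤ C² / N^{η+1}. -/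
/-!
Since `ζ² 1_{ζ > θ} ≤ ζ^(2k+2) / θ^(2k)`, it suffices that the sums `S_N = ∑_{i<N} X_i` of the
centred variables `X_i = Y_i - E Y₀` satisfy `E[S_N^(2k)] = O(N^k)` for every `k`; then
`E[ζ_N^(2k+2)] = O(N^(-(k+1)))`, and `k = ⌈η⌉` gives the claim.
The moment bound goes by induction on `k`. In the binomial expansion of `E[(S_N + X_N)^(2k+2)]`
independence factorises every term, the term linear in `X_N` vanishes, and the remaining new terms
involve moments of `S_N` of order at most `2k`, hence are `O(N^k)`; summing these increments over
`N` gives `O(N^(k+1))`.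
-/

open MeasureTheory ProbabilityTheory Finset

section MomentBounds
variable {Ω : Type*} [MeasurableSpace Ω] {P : Measure Ω}

lemma MeasureTheory.MemLp.integrable_pow [IsFiniteMeasure P] {f : Ω → ℝ} {n : ℕ}
    (hf : MemLp f n P) : Integrable (fun ω => f ω ^ n) P :=
  (integrable_norm_iff (hf.aestronglyMeasurable.pow n)).mp (by simpa using hf.integrable_norm_pow')

lemma abs_pow_le_one_add_abs_pow (x : ℝ) {j n : ℕ} (hjn : j ≤ n) : |x| ^ j ≤ 1 + |x| ^ n := by
  rcases le_total |x| 1 with h | h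
  · linarith [pow_le_one₀ (abs_nonneg x) h (n := j), pow_nonneg (abs_nonneg x) n]
  · linarith [pow_le_pow_right₀ h hjn]

lemma abs_integral_pow_le_one_add [IsProbabilityMeasure P] {f : Ω → ℝ} {j k : ℕ}
    (hf : MemLp f (2 * k : ℕ) P) (hjk : j ≤ 2 * k) :
    |∫ ω, f ω ^ j ∂P| ≤ 1 + ∫ ω, f ω ^ (2 * k) ∂P := by
  have hint := (integrable_const 1).add hf.integrable_pow
  calc |∫ ω, f ω ^ j ∂P| ≤ ∫ ω, |f ω| ^ j ∂P := by
        simpa only [abs_pow] using abs_integral_le_integral_abs (f := fun ω => f ω ^ j)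
    _ ≤ ∫ ω, (1 + f ω ^ (2 * k)) ∂P := by
        refine integral_mono_of_nonneg (ae_of_all _ fun ω => by positivity) hint
          (ae_of_all _ fun ω => ?_)
        simpa only [(even_two_mul k).pow_abs] using abs_pow_le_one_add_abs_pow (f ω) hjk
    _ = 1 + ∫ ω, f ω ^ (2 * k) ∂P := by
        rw [integral_add (integrable_const 1) hf.integrable_pow]
        simp

lemma ProbabilityTheory.IndepFun.integral_add_pow [IsFiniteMeasure P] {S X : Ω → ℝ}
    (hSX : IndepFun S X P) (hS : ∀ p : ℕ, MemLp S p P) (hX : ∀ p : ℕ, MemLp X p P) (K : ℕ) :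
    ∫ ω, (S ω + X ω) ^ K ∂P =
      ∑ j ∈ range (K + 1), (∫ ω, S ω ^ j ∂P) * (∫ ω, X ω ^ (K - j) ∂P) * K.choose j := by
  have hpow (j m : ℕ) : IndepFun (fun ω => S ω ^ j) (fun ω => X ω ^ m) P :=
    hSX.comp (measurable_id.pow_const j) (measurable_id.pow_const m)
  have hint (j : ℕ) : Integrable (fun ω => S ω ^ j * X ω ^ (K - j) * K.choose j) P :=
    ((hpow j (K - j)).integrable_mul (hS j).integrable_pow (hX (K - j)).integrable_pow).mul_const _
  simp_rw [add_pow]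
  rw [integral_finsetSum _ fun j _ => hint j]
  refine sum_congr rfl fun j _ => ?_
  rw [integral_mul_const, (hpow j (K - j)).integral_fun_mul_eq_mul_integral
    (hS j).integrable_pow.aestronglyMeasurable (hX (K - j)).integrable_pow.aestronglyMeasurable]

lemma setIntegral_sq_le_integral_pow_div [IsFiniteMeasure P] {f : Ω → ℝ} {k : ℕ}
    (hf : MemLp f (2 * (k + 1) : ℕ) P) {θ : ℝ} (hθ : 0 < θ) :
    ∫ ω in {ω | θ < f ω}, f ω ^ 2 ∂P ≤ (∫ ω, f ω ^ (2 * (k + 1)) ∂P) / θ ^ (2 * k) := by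
  have hg := hf.integrable_pow.div_const (θ ^ (2 * k))
  have hs : NullMeasurableSet {ω | θ < f ω} P :=
    nullMeasurableSet_lt aemeasurable_const hf.aestronglyMeasurable.aemeasurable
  rw [← integral_div]
  calc ∫ ω in {ω | θ < f ω}, f ω ^ 2 ∂P
      ≤ ∫ ω in {ω | θ < f ω}, f ω ^ (2 * (k + 1)) / θ ^ (2 * k) ∂P := by
        refine integral_mono_of_nonneg (ae_of_all _ fun ω => sq_nonneg _) hg.integrableOn
          ((ae_restrict_iff'₀ hs).2 (ae_of_all _ fun ω (hω : θ < f ω) => ?_))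
        rw [le_div_iff₀ (by positivity)]
        calc f ω ^ 2 * θ ^ (2 * k) ≤ f ω ^ 2 * f ω ^ (2 * k) := by gcongr
          _ = f ω ^ (2 * (k + 1)) := by ring
    _ ≤ ∫ ω, f ω ^ (2 * (k + 1)) / θ ^ (2 * k) ∂P :=
        setIntegral_le_integral hg (ae_of_all _ fun ω =>
          div_nonneg ((even_two_mul _).pow_nonneg _) (by positivity))

lemma pow_succ_add_pow_le_pow_succ {x : ℝ} (hx : 0 ≤ x) (k : ℕ) :
    x ^ (k + 1) + (x + 1) ^ k ≤ (x + 1) ^ (k + 1) := by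
  have := pow_le_pow_left₀ hx (le_add_of_nonneg_right zero_le_one) k
  rw [pow_succ, pow_succ]
  nlinarith

lemma memLp_sum_range {X : ℕ → Ω → ℝ} (hident : ∀ i, IdentDistrib (X i) (X 0) P P) {p : ENNReal}
    (hLp : MemLp (X 0) p P) (N : ℕ) : MemLp (fun ω => ∑ i ∈ range N, X i ω) p P :=
  memLp_finsetSum _ fun i _ => (hident i).memLp_iff.2 hLp

section IID

variable [IsProbabilityMeasure P] {X : ℕ → Ω → ℝ}

lemma integral_sum_range_succ_pow_eq (hmeas : ∀ i, Measurable (X i))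
    (hindep : iIndepFun X P) (hident : ∀ i, IdentDistrib (X i) (X 0) P P)
    (hLp : ∀ p : ℕ, MemLp (X 0) p P) (hmean : ∫ ω, X 0 ω ∂P = 0) (n N : ℕ) :
    ∫ ω, (∑ i ∈ range (N + 1), X i ω) ^ (n + 2) ∂P =
      ∫ ω, (∑ i ∈ range N, X i ω) ^ (n + 2) ∂P + ∑ j ∈ range (n + 1),
        (∫ ω, (∑ i ∈ range N, X i ω) ^ j ∂P) * (∫ ω, X 0 ω ^ (n + 2 - j) ∂P) *
          (n + 2).choose j := by
  have hSX : IndepFun (fun ω => ∑ i ∈ range N, X i ω) (X N) P := by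
    simpa [Finset.sum_fn] using hindep.indepFun_finsetSum_of_notMem hmeas notMem_range_self
  have hXmom (m : ℕ) : ∫ ω, X N ω ^ m ∂P = ∫ ω, X 0 ω ^ m ∂P :=
    ((hident N).comp (measurable_id.pow_const m)).integral_eq
  simp_rw [sum_range_succ (n := N)]
  rw [hSX.integral_add_pow (fun p => memLp_sum_range hident (hLp p) N)
    (fun p => (hident N).memLp_iff.2 (hLp p)), sum_range_succ, sum_range_succ]
  simp [hXmom, (hident N).integral_eq, hmean, add_comm]

lemma exists_integral_sum_range_succ_pow_le (hmeas : ∀ i, Measurable (X i))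
    (hindep : iIndepFun X P) (hident : ∀ i, IdentDistrib (X i) (X 0) P P)
    (hLp : ∀ p : ℕ, MemLp (X 0) p P) (hmean : ∫ ω, X 0 ω ∂P = 0) {k : ℕ} {M : ℝ} (hM0 : 0 ≤ M)
    (hM : ∀ N : ℕ, ∫ ω, (∑ i ∈ range N, X i ω) ^ (2 * k) ∂P ≤ M * N ^ k) :
    ∃ D : ℝ, 0 ≤ D ∧ ∀ N : ℕ, ∫ ω, (∑ i ∈ range (N + 1), X i ω) ^ (2 * k + 2) ∂P ≤
      ∫ ω, (∑ i ∈ range N, X i ω) ^ (2 * k + 2) ∂P + D * (N + 1) ^ k := by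
  refine ⟨∑ j ∈ range (2 * k + 1),
    (2 * k + 2).choose j * |∫ ω, X 0 ω ^ (2 * k + 2 - j) ∂P| * (1 + M), by positivity, fun N => ?_⟩
  have hSmom (j : ℕ) (hj : j ≤ 2 * k) :
      |∫ ω, (∑ i ∈ range N, X i ω) ^ j ∂P| ≤ (1 + M) * (N + 1) ^ k := by
    have h1 : (1 : ℝ) ≤ (N + 1) ^ k := one_le_pow₀ (by linarith [N.cast_nonneg (α := ℝ)])
    have h2 : (N : ℝ) ^ k ≤ (N + 1) ^ k := pow_le_pow_left₀ N.cast_nonneg (by linarith) k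
    linarith [abs_integral_pow_le_one_add (memLp_sum_range hident (hLp (2 * k)) N) hj, hM N,
      mul_le_mul_of_nonneg_left h2 hM0]
  rw [integral_sum_range_succ_pow_eq hmeas hindep hident hLp hmean, sum_mul]
  gcongr ∫ ω, (∑ i ∈ range N, X i ω) ^ (2 * k + 2) ∂P + ?_
  refine sum_le_sum fun j hj => ?_
  calc _ ≤ |∫ ω, (∑ i ∈ range N, X i ω) ^ j ∂P| * |∫ ω, X 0 ω ^ (2 * k + 2 - j) ∂P| *
        (2 * k + 2).choose j := by
        rw [← abs_mul]; gcongr; exact le_abs_self _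
    _ ≤ (1 + M) * (N + 1) ^ k * |∫ ω, X 0 ω ^ (2 * k + 2 - j) ∂P| * (2 * k + 2).choose j := by
        gcongr; exact hSmom j (Nat.lt_succ_iff.1 (mem_range.1 hj))
    _ = _ := by ring

theorem exists_integral_sum_range_pow_le (hmeas : ∀ i, Measurable (X i))
    (hindep : iIndepFun X P) (hident : ∀ i, IdentDistrib (X i) (X 0) P P)
    (hLp : ∀ p : ℕ, MemLp (X 0) p P) (hmean : ∫ ω, X 0 ω ∂P = 0) (k : ℕ) :
    ∃ M : ℝ, 0 ≤ M ∧ ∀ N : ℕ, ∫ ω, (∑ i ∈ range N, X i ω) ^ (2 * k) ∂P ≤ M * N ^ k := by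
  induction k with
  | zero => exact ⟨1, zero_le_one, fun N => by simp⟩
  | succ k ih =>
    obtain ⟨M, hM0, hM⟩ := ih
    obtain ⟨D, hD0, hD⟩ :=
      exists_integral_sum_range_succ_pow_le hmeas hindep hident hLp hmean hM0 hM
    refine ⟨D, hD0, fun N => ?_⟩
    rw [mul_add_one]
    induction N with
    | zero => simp
    | succ N ihN =>
      calc ∫ ω, (∑ i ∈ range (N + 1), X i ω) ^ (2 * k + 2) ∂P
          ≤ D * N ^ (k + 1) + D * (N + 1) ^ k := by linarith [hD N]
        _ ≤ D * ((N + 1 : ℕ) : ℝ) ^ (k + 1) := by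
          rw [← mul_add, Nat.cast_succ]
          exact mul_le_mul_of_nonneg_left (pow_succ_add_pow_le_pow_succ N.cast_nonneg k) hD0

theorem exists_integral_mean_sub_pow_le (hmeas : ∀ i, Measurable (X i))
    (hindep : iIndepFun X P) (hident : ∀ i, IdentDistrib (X i) (X 0) P P)
    (hLp : ∀ p : ℕ, MemLp (X 0) p P) (k : ℕ) :
    ∃ M : ℝ, 0 ≤ M ∧ ∀ N : ℕ, 1 ≤ N →
      ∫ ω, (1 / (N : ℝ) * ∑ i ∈ range N, X i ω - ∫ ω', X 0 ω' ∂P) ^ (2 * k) ∂P ≤ M / N ^ k := by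
  set μ := ∫ ω', X 0 ω' ∂P
  have hmean : ∫ ω, X 0 ω - μ ∂P = 0 := by
    simp [μ, integral_sub (memLp_one_iff_integrable.1 (by simpa using hLp 1)) (integrable_const _)]
  obtain ⟨M, hM0, hM⟩ := exists_integral_sum_range_pow_le (X := fun i ω => X i ω - μ)
    (fun i => (hmeas i).sub_const _) (hindep.comp _ fun _ => measurable_sub_const _)
    (fun i => (hident i).comp (measurable_sub_const _)) (fun p => (hLp p).sub (memLp_const μ))
    hmean k
  refine ⟨M, hM0, fun N hN => ?_⟩
  have hN0 : (N : ℝ) ≠ 0 := by positivity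
  have hcentre (ω : Ω) : 1 / (N : ℝ) * ∑ i ∈ range N, X i ω - μ =
      (N : ℝ)⁻¹ * ∑ i ∈ range N, (X i ω - μ) := by
    rw [sum_sub_distrib, sum_const, card_range, nsmul_eq_mul]
    field_simp
  simp_rw [hcentre, mul_pow]
  rw [integral_const_mul]
  calc _ ≤ (N : ℝ)⁻¹ ^ (2 * k) * (M * N ^ k) := by gcongr; exact hM N
    _ = M / N ^ k := by
      rw [inv_pow, pow_mul', sq]
      field_simp

end IID

end MomentBounds

/-- Tail-moment concentration for empirical means of i.i.d. variables with all
moments finite: `E[ζ_N² 1_{ζ_N > θ}] ≤ C²/N^{η+1}` for `N` large, where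
`ζ_N = (1/N) Σ_{i<N} Y_i − E[Y₀]`. -/
theorem stmt_16 {Ω : Type*} [MeasurableSpace Ω] (P : Measure Ω) [IsProbabilityMeasure P]
    (Y : ℕ → Ω → ℝ) (hmeas : ∀ i, Measurable (Y i))
    (hindep : iIndepFun Y P)
    (hident : ∀ i, IdentDistrib (Y i) (Y 0) P P)
    (hmom : ∀ r : ℝ, 1 ≤ r → MemLp (Y 0) (ENNReal.ofReal r) P)
    (ζ : ℕ → Ω → ℝ)
    (hζ : ∀ N ω, ζ N ω = (1 / (N : ℝ)) * ∑ i ∈ Finset.range N, Y i ω - ∫ ω', Y 0 ω' ∂P) :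
    ∀ θ : ℝ, 0 < θ → ∀ η : ℝ, 0 < η → ∃ C : ℝ, 0 < C ∧ ∃ N₀ : ℕ, ∀ N : ℕ, N₀ ≤ N →
      ∫ ω in {ω | θ < ζ N ω}, (ζ N ω) ^ 2 ∂P ≤ C ^ 2 / (N : ℝ) ^ (η + 1) := by
  intro θ hθ η _
  have hLp (p : ℕ) : MemLp (Y 0) p P := by
    have := hmom (p + 1 : ℕ) (by simp)
    rw [ENNReal.ofReal_natCast] at this
    exact this.mono_exponent (by exact_mod_cast p.le_succ)
  set k := ⌈η⌉₊
  obtain ⟨M, hM0, hM⟩ := exists_integral_mean_sub_pow_le hmeas hindep hident hLp (k + 1)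
  refine ⟨√(M / θ ^ (2 * k) + 1), by positivity, 1, fun N hN => ?_⟩
  have hNη : (N : ℝ) ^ (η + 1) ≤ (N : ℝ) ^ (k + 1) := by
    rw [← Real.rpow_natCast]
    exact Real.rpow_le_rpow_of_exponent_le (by exact_mod_cast hN)
      (by push_cast; linarith [Nat.le_ceil η])
  have hζLp : MemLp (ζ N) (2 * (k + 1) : ℕ) P := funext (hζ N) ▸
    ((memLp_sum_range hident (hLp _) N).const_mul _).sub (memLp_const _)
  calc ∫ ω in {ω | θ < ζ N ω}, (ζ N ω) ^ 2 ∂P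
      ≤ (∫ ω, ζ N ω ^ (2 * (k + 1)) ∂P) / θ ^ (2 * k) := setIntegral_sq_le_integral_pow_div hζLp hθ
    _ ≤ M / N ^ (k + 1) / θ ^ (2 * k) := by
        gcongr
        simpa only [hζ] using hM N hN
    _ ≤ √(M / θ ^ (2 * k) + 1) ^ 2 / (N : ℝ) ^ (η + 1) := by
        rw [Real.sq_sqrt (by positivity), div_right_comm]
        gcongr
        linarith
end
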